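/- arXiv:2510.21882 — 6 statements merged into one kernel-verified Lean document; each statement's English description precedes it below -/
import Mathlib

section
/- In any centered Kleene algebra A with center c, for all a, b ∈ A: if a ∧ c = b ∧ c and ¬a ∧ c = ¬b ∧ c then a = b. -/
/-- A centered Kleene algebra: a distributive lattice with an involutive
De Morgan negation satisfying the Kleene inequality, and a center `c` with `¬c = c`. -/
class CenteredKleeneAlgebra (A : Type*) extends DistribLattice A where
  neg : A → A
  center : A
  neg_neg : ∀ a : A, neg (neg a) = a
  neg_inf : ∀ a b : A, neg (a ⊓ b) = neg a ⊔ neg b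
  kleene : ∀ a b : A, neg a ⊓ a ≤ neg b ⊔ b
  neg_center : neg center = center

open CenteredKleeneAlgebra

namespace CenteredKleeneAlgebra

variable {A : Type*} [CenteredKleeneAlgebra A]

theorem neg_injective : Function.Injective (neg : A → A) :=
  Function.LeftInverse.injective (g := neg) neg_neg

theorem neg_sup (a b : A) : neg (a ⊔ b) = neg a ⊓ neg b := by
  apply neg_injective
  rw [neg_neg, neg_inf, neg_neg, neg_neg]

theorem sup_center_eq_of_neg_inf_center_eq {a b : A}
    (h : neg a ⊓ center = neg b ⊓ center) : a ⊔ center = b ⊔ center :=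
  neg_injective <| by rw [neg_sup, neg_sup, neg_center, h]

end CenteredKleeneAlgebra

/-- in a centered Kleene algebra with center `c`,
if `a ⊓ c = b ⊓ c` and `¬a ⊓ c = ¬b ⊓ c` then `a = b`. -/
theorem centered_kleene_cancel {A : Type*} [CenteredKleeneAlgebra A] (a b : A)
    (h1 : a ⊓ center = b ⊓ center) (h2 : neg a ⊓ center = neg b ⊓ center) :
    a = b :=
  eq_of_inf_eq_sup_eq h1 (sup_center_eq_of_neg_inf_center_eq h2)
end

section
/- Every centered Kleene algebra A is isomorphic to a DF-twist algebra over ◇(A): the map ι(a) := (a ∧ c, ¬a ∧ c) is an injective homomorphism from A into the full DF-twist algebra over the upper-bounded distributive lattice ◇(A) = {x ∧ c : x ∈ A} (with top c), preserving ∧, ¬, and sending c to (c, c), whose image projects onto ◇(A) in the first coordinate. -/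
open CenteredKleeneAlgebra

namespace CenteredKleeneAlgebra

variable {A : Type*} [CenteredKleeneAlgebra A]

theorem center_le_neg_sup_self (a : A) : center ≤ neg a ⊔ a := by
  simpa only [neg_center, inf_idem] using kleene center a

theorem neg_neg_inf_center (a : A) : neg (neg a ⊓ center) = a ⊔ center := by
  rw [neg_inf, neg_neg, neg_center]

def twist (a : A) : A × A := (a ⊓ center, neg a ⊓ center)

theorem twist_fst_sup_twist_snd (a : A) : (twist a).1 ⊔ (twist a).2 = center := by
  rw [twist, ← inf_sup_right, sup_comm]
  exact inf_eq_right.mpr (center_le_neg_sup_self a)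

theorem twist_injective : Function.Injective (twist : A → A × A) := by
  intro a b h
  have h_inf : a ⊓ center = b ⊓ center := congrArg Prod.fst h
  have h_sup : a ⊔ center = b ⊔ center := by
    rw [← neg_neg_inf_center a, ← neg_neg_inf_center b]
    exact congrArg (fun p : A × A => neg p.2) h
  exact eq_of_inf_eq_sup_eq h_inf h_sup

theorem twist_inf (a b : A) :
    twist (a ⊓ b) = ((twist a).1 ⊓ (twist b).1, (twist a).2 ⊔ (twist b).2) := by
  simp only [twist, neg_inf, inf_sup_right, Prod.mk.injEq, and_true]
  rw [inf_inf_distrib_right]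

theorem twist_neg (a : A) : twist (neg a) = ((twist a).2, (twist a).1) := by
  rw [twist, twist, neg_neg]

theorem twist_center : twist (center : A) = (center, center) := by
  rw [twist, neg_center, inf_idem]

theorem image_fst_range_twist :
    Prod.fst '' Set.range (twist : A → A × A) = Set.range (fun x : A => x ⊓ center) := by
  rw [← Set.range_comp]
  rfl

end CenteredKleeneAlgebra

/-- DF-twist representation: every centered Kleene algebra `A` is
isomorphic to a DF-twist algebra over `◇(A)` via `ι(a) := (a ⊓ c, ¬a ⊓ c)`:
`ι` lands in the universe of the full DF-twist algebra over the upper-bounded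
distributive lattice `◇(A)` (pairs joining to the top `c`), is injective,
preserves `⊓` (computed twist-wise), `¬` (the swap), sends `c` to `(c, c)`,
and its image projects onto `◇(A)` in the first coordinate. -/
theorem df_twist_representation {A : Type*} [CenteredKleeneAlgebra A] :
    let ι : A → A × A := fun a => (a ⊓ center, neg a ⊓ center)
    (∀ a : A, (ι a).1 ⊔ (ι a).2 = center) ∧
    Function.Injective ι ∧
    (∀ a b : A, ι (a ⊓ b) = ((ι a).1 ⊓ (ι b).1, (ι a).2 ⊔ (ι b).2)) ∧
    (∀ a : A, ι (neg a) = ((ι a).2, (ι a).1)) ∧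
    ι center = (center, center) ∧
    Prod.fst '' Set.range ι = Set.range (fun x : A => x ⊓ center) :=
  ⟨twist_fst_sup_twist_snd, twist_injective, twist_inf, twist_neg, twist_center,
    image_fst_range_twist⟩
end

section
/- Every CN-algebra A is isomorphic to a CN-twist algebra over ◇(A) via the map ι(a) := (◇a, ◇¬a); in particular ι additionally preserves the implication: ι(a → b) = ι(a) → ι(b), where on pairs (x₁,y₁) → (x₂,y₂) := (x₁ → x₂, x₁ → y₂). -/
/-- A CN-algebra: a centered Kleene lattice (distributive lattice with involutive
De Morgan negation satisfying the Kleene inequality and a center `½`) together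
with an implication satisfying (CN1)–(CN5), where `◇x := x ⊓ ½`. -/
class CNAlgebra (A : Type*) extends DistribLattice A where
  neg : A → A
  half : A
  imp : A → A → A
  neg_neg : ∀ a : A, neg (neg a) = a
  neg_inf : ∀ a b : A, neg (a ⊓ b) = neg a ⊔ neg b
  kleene : ∀ a b : A, neg a ⊓ a ≤ neg b ⊔ b
  neg_half : neg half = half
  cn1 : ∀ x y z : A, imp (x ⊓ y) z = imp x (imp y z)
  cn2 : ∀ x y : A, half ≤ imp x (imp y y)
  cn3 : ∀ x y : A, half ≤ imp (imp (imp x y) x) x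
  cn4 : ∀ x y : A, imp x y ⊓ half = imp (x ⊓ half) (y ⊓ half)
  cn5 : ∀ x y : A, neg (imp x y) = imp x (neg y)

/-! The coordinates of `a ↦ (◇a, ◇¬a)` join to `½` by the Kleene inequality taken at the
fixpoint `½ = ¬½`. The map is injective because, by De Morgan, `◇¬a` determines `a ⊔ ½`, and in a
distributive lattice `a` is determined by `a ⊓ ½` and `a ⊔ ½`. It preserves the implication by
(CN4) on the first coordinate and by (CN5) followed by (CN4) on the second. -/

namespace CNAlgebra

variable {A : Type*} [CNAlgebra A]

theorem half_le_neg_sup_self (a : A) : half ≤ neg a ⊔ a := by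
  simpa only [neg_half, inf_idem] using kleene (half : A) a

theorem inf_half_sup_neg_inf_half (a : A) : a ⊓ half ⊔ neg a ⊓ half = half := by
  rw [← inf_sup_right, sup_comm]
  exact inf_eq_right.mpr (half_le_neg_sup_self a)

theorem neg_inf_half (a : A) : neg (a ⊓ half) = neg a ⊔ half := by
  rw [neg_inf, neg_half]

theorem eq_of_inf_half_eq_of_neg_inf_half_eq {a b : A} (h : a ⊓ half = b ⊓ half)
    (hneg : neg a ⊓ half = neg b ⊓ half) : a = b := by
  have hsup : a ⊔ half = b ⊔ half := by
    simpa only [neg_inf_half, neg_neg] using congrArg neg hneg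
  exact eq_of_inf_eq_sup_eq h hsup

theorem neg_imp_inf_half (a b : A) : neg (imp a b) ⊓ half = imp (a ⊓ half) (neg b ⊓ half) := by
  rw [cn5, cn4]

end CNAlgebra

open CNAlgebra

/-- CN-twist representation: every CN-algebra `A` is isomorphic to
a CN-twist algebra over `◇(A)` via `ι(a) := (◇a, ◇¬a)`: `ι` lands in the twist
universe (pairs joining to `½`), is injective, preserves `⊓`, `¬`, `½`, and in
particular the implication: `ι(a → b) = ι(a) → ι(b)` where, on pairs,
`(x₁,y₁) → (x₂,y₂) := (x₁ → x₂, x₁ → y₂)`. -/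
theorem cn_twist_representation {A : Type*} [CNAlgebra A] :
    let ι : A → A × A := fun a => (a ⊓ half, neg a ⊓ half)
    (∀ a : A, (ι a).1 ⊔ (ι a).2 = half) ∧
    Function.Injective ι ∧
    (∀ a b : A, ι (a ⊓ b) = ((ι a).1 ⊓ (ι b).1, (ι a).2 ⊔ (ι b).2)) ∧
    (∀ a : A, ι (neg a) = ((ι a).2, (ι a).1)) ∧
    ι half = (half, half) ∧
    (∀ a b : A, ι (imp a b) = (imp ((ι a).1) ((ι b).1), imp ((ι a).1) ((ι b).2))) ∧
    Prod.fst '' Set.range ι = Set.range (fun x : A => x ⊓ half) := by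
  intro ι
  refine ⟨inf_half_sup_neg_inf_half,
    fun a b h => eq_of_inf_half_eq_of_neg_inf_half_eq (congrArg Prod.fst h) (congrArg Prod.snd h),
    fun a b => ?_, fun a => ?_, ?_, fun a b => ?_, (Set.range_comp Prod.fst ι).symm⟩
  · exact Prod.ext (inf_inf_distrib_right a b half)
      (by simp only [ι, CNAlgebra.neg_inf, inf_sup_right])
  · exact Prod.ext rfl (by simp only [ι, CNAlgebra.neg_neg])
  · exact Prod.ext (inf_idem half) (by simp only [ι, neg_half, inf_idem])
  · exact Prod.ext (cn4 a b) (neg_imp_inf_half a b)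
end

section
/- In an F-algebra A, for all a, b ∈ ◇(A): a ≤ b if and only if a → b = ½. Consequently ◇(A) with the restricted operations is a generalized Boolean algebra. -/
/-- An F-algebra: a centered Kleene algebra (distributive lattice with involutive
De Morgan negation satisfying the Kleene inequality, with center `½`) with an
implication satisfying (F1)–(F6), where `◇x := x ⊓ ½`. -/
class FAlgebra (A : Type*) extends DistribLattice A where
  neg : A → A
  half : A
  imp : A → A → A
  neg_neg : ∀ a : A, neg (neg a) = a
  neg_inf : ∀ a b : A, neg (a ⊓ b) = neg a ⊔ neg b
  kleene : ∀ a b : A, neg a ⊓ a ≤ neg b ⊔ b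
  neg_half : neg half = half
  f1 : ∀ x y : A, x ⊓ y = x ⊓ imp x y
  f2 : ∀ x y : A, imp x y ≤ (x ⊓ y) ⊔ half
  f3 : ∀ x y z : A, imp (x ⊓ y) z = imp x (imp y z)
  f4 : ∀ x y : A, half ≤ imp x (imp y y)
  f5 : ∀ x y : A, half ≤ imp (imp (imp x y) x) x
  f6 : ∀ x y : A, imp x y ⊓ half = imp (x ⊓ half) (y ⊓ half)

open FAlgebra

/-!
Membership in `◇(A)` is the same as lying below `½`, so everything reduces to statements
about elements `a ≤ ½`. For such `a`, (F4) together with (F3) and (F1) shows that `½ ≤ a → b`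
exactly when `a ≤ b`, while (F6) keeps `◇(A)` closed under `→`, so there `a → b ≤ ½`.
Residuation is then this criterion applied to `a ⊓ b` after currying with (F3), and Peirce's
law comes from (F5): the criterion turns `½ ≤ ((a → b) → a) → a` into `(a → b) → a ≤ a`.
-/

theorem Set.range_inf_right_eq_Iic {α : Type*} [SemilatticeInf α] (c : α) :
    Set.range (fun x : α => x ⊓ c) = Set.Iic c := by
  ext a
  exact ⟨fun ⟨x, hx⟩ => hx ▸ inf_le_right, fun ha => ⟨a, inf_eq_left.mpr ha⟩⟩

namespace FAlgebra

variable {A : Type*} [FAlgebra A] {a b z : A}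

theorem imp_le_half (ha : a ≤ half) (hb : b ≤ half) : imp a b ≤ half := by
  have h := f6 a b
  rw [inf_eq_left.mpr ha, inf_eq_left.mpr hb] at h
  exact h ▸ inf_le_right

theorem half_le_imp_of_le (h : a ≤ b) : half ≤ imp a b := by
  simpa only [← f3, inf_eq_left.mpr h] using f4 a b

theorem half_le_imp_iff (ha : a ≤ half) : half ≤ imp a b ↔ a ≤ b := by
  refine ⟨fun h => ?_, half_le_imp_of_le⟩
  calc a = a ⊓ half := (inf_eq_left.mpr ha).symm
    _ ≤ a ⊓ imp a b := inf_le_inf_left a h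
    _ = a ⊓ b := (f1 a b).symm
    _ ≤ b := inf_le_right

theorem imp_eq_half_iff (ha : a ≤ half) (hb : b ≤ half) : imp a b = half ↔ a ≤ b := by
  rw [← half_le_imp_iff ha]
  exact ⟨ge_of_eq, (imp_le_half ha hb).antisymm⟩

theorem inf_le_iff_le_imp (hb : b ≤ half) : a ⊓ b ≤ z ↔ b ≤ imp a z := by
  rw [← half_le_imp_iff (inf_le_right.trans hb), inf_comm, f3, half_le_imp_iff hb]

theorem imp_imp_self (ha : a ≤ half) (hb : b ≤ half) : imp (imp a b) a = a := by
  have hab : imp (imp a b) a ≤ half := imp_le_half (imp_le_half ha hb) ha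
  refine le_antisymm ((half_le_imp_iff hab).mp (f5 a b)) ?_
  exact (inf_le_iff_le_imp ha).mp inf_le_right

end FAlgebra

/-- in an F-algebra, for `a, b ∈ ◇(A)`, `a ≤ b` iff `a → b = ½`;
consequently `◇(A)` with the restricted operations is a generalized Boolean
algebra (closed under the operations, with top `½`, residuation and Peirce's law). -/
theorem f_diamond_generalized_boolean {A : Type*} [FAlgebra A] :
    let S : Set A := Set.range (fun x : A => x ⊓ half)
    (∀ a ∈ S, ∀ b ∈ S, (a ≤ b ↔ imp a b = half)) ∧
    (∀ a ∈ S, ∀ b ∈ S, a ⊓ b ∈ S ∧ a ⊔ b ∈ S ∧ imp a b ∈ S) ∧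
    ((half : A) ∈ S) ∧
    (∀ a ∈ S, a ≤ half) ∧
    (∀ a ∈ S, ∀ b ∈ S, ∀ z ∈ S, (a ⊓ b ≤ z ↔ b ≤ imp a z)) ∧
    (∀ a ∈ S, ∀ b ∈ S, imp (imp a b) a = a) := by
  intro S
  simp only [S, Set.range_inf_right_eq_Iic, Set.mem_Iic]
  refine ⟨fun a ha b hb => (imp_eq_half_iff ha hb).symm,
    fun a ha b hb => ⟨inf_le_of_left_le ha, sup_le ha hb, imp_le_half ha hb⟩,
    le_rfl, fun _ ha => ha,
    fun _ _ b hb _ _ => inf_le_iff_le_imp hb,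
    fun a ha b hb => imp_imp_self ha hb⟩
end

section
/- In every F-algebra, the identity ◇¬(x ∧ y) = ◇¬(x → y) holds, where ◇x := x ∧ ½. -/
open FAlgebra

namespace FAlgebra

variable {A : Type*} [FAlgebra A]

theorem neg_sup (a b : A) : neg (a ⊔ b) = neg a ⊓ neg b := by
  rw [← neg_neg (neg a ⊓ neg b), neg_inf, neg_neg, neg_neg]

theorem neg_sup_half (a : A) : neg (a ⊔ half) = neg a ⊓ half := by
  rw [neg_sup, neg_half]

theorem inf_le_imp (x y : A) : x ⊓ y ≤ imp x y := by
  rw [f1 x y]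
  exact inf_le_right

theorem inf_sup_half_eq_imp_sup_half (x y : A) : x ⊓ y ⊔ half = imp x y ⊔ half :=
  le_antisymm (sup_le_sup_right (inf_le_imp x y) half) (sup_le (f2 x y) le_sup_right)

end FAlgebra

/-- in every F-algebra, `◇¬(x ⊓ y) = ◇¬(x → y)`, where `◇x := x ⊓ ½`. -/
theorem f_diamond_neg_inf_eq_diamond_neg_imp {A : Type*} [FAlgebra A] (x y : A) :
    neg (x ⊓ y) ⊓ half = neg (imp x y) ⊓ half := by
  rw [← neg_sup_half, ← neg_sup_half, inf_sup_half_eq_imp_sup_half]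
end

section
/- Given an Fg-algebra A, the algebra ◇(A) = {x ∧ ⊤ : x ∈ A}, with restricted operations and bounds 0 and ⊤, is a Boolean algebra. -/
/-- A DFg-algebra: a bi-centered De Morgan lattice (distributive lattice with
involutive De Morgan negation and two distinct negation fixed points `⊥', ⊤'`)
with a lower bound `⊥` such that `⊥' ⊓ ⊤' = ⊥`, together with the
cancellation property `a ⊓ ⊤' = b ⊓ ⊤' ∧ ¬a ⊓ ⊤' = ¬b ⊓ ⊤' → a = b`
(which follows from distributivity and absorption as in the centered Kleene case). -/
class DFgAlgebra (A : Type*) extends DistribLattice A, OrderBot A where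
  neg : A → A
  pbot : A
  ptop : A
  neg_neg : ∀ a : A, neg (neg a) = a
  neg_inf : ∀ a b : A, neg (a ⊓ b) = neg a ⊔ neg b
  neg_pbot : neg pbot = pbot
  neg_ptop : neg ptop = ptop
  pbot_ne_ptop : pbot ≠ ptop
  pbot_inf_ptop : pbot ⊓ ptop = ⊥
  cancel : ∀ a b : A, a ⊓ ptop = b ⊓ ptop → neg a ⊓ ptop = neg b ⊓ ptop → a = b


/-- An Fg-algebra: a DFg-algebra with an implication satisfying (F1)–(F6),
where `◇x := x ⊓ ⊤'`. -/
class FgAlgebra (A : Type*) extends DFgAlgebra A where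
  imp : A → A → A
  f1 : ∀ x y : A, x ⊓ y = x ⊓ imp x y
  f2 : ∀ x y : A, imp x y ≤ (x ⊓ y) ⊔ ptop
  f3 : ∀ x y z : A, imp (x ⊓ y) z = imp x (imp y z)
  f4 : ∀ x y : A, ptop ≤ imp x (imp y y)
  f5 : ∀ x y : A, ptop ≤ imp (imp (imp x y) x) x
  f6 : ∀ x y : A, imp x y ⊓ ptop = imp (x ⊓ ptop) (y ⊓ ptop)

/-!
An element lies in `◇(A)` exactly when it is below `⊤'`. On such elements, (F3) and (F4) give
`⊤' ≤ u → v` whenever `u ≤ v`, and (F1) turns `b ≤ b → c` into `b ≤ c`; together these make `→`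
the residual of `⊓`. (F2) keeps `a → b` below `⊤'` once `a` is, so `◇(A)` is closed under `→`,
and (F5) then yields Peirce's law, which makes the Heyting algebra `◇(A)` Boolean.
-/

open DFgAlgebra FgAlgebra

namespace FgAlgebra

variable {A : Type*} [FgAlgebra A]

theorem mem_range_inf_ptop_iff {a : A} : a ∈ Set.range (· ⊓ ptop) ↔ a ≤ ptop :=
  ⟨by rintro ⟨x, rfl⟩; exact inf_le_right, fun h => ⟨a, inf_eq_left.mpr h⟩⟩

theorem ptop_le_imp_of_le {u v : A} (h : u ≤ v) : ptop ≤ imp u v := by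
  simpa only [← f3, inf_eq_left.mpr h] using f4 u v

theorem le_of_le_imp_self {b c : A} (h : b ≤ imp b c) : b ≤ c := by
  rw [← inf_eq_left, f1, inf_eq_left.mpr h]

theorem inf_imp_le (a z : A) : a ⊓ imp a z ≤ z := by
  rw [← f1]
  exact inf_le_right

theorem imp_le_ptop {a : A} (ha : a ≤ ptop) (z : A) : imp a z ≤ ptop :=
  (f2 a z).trans (sup_le (inf_le_left.trans ha) le_rfl)

theorem le_imp_iff_inf_le {a b z : A} (hb : b ≤ ptop) : b ≤ imp a z ↔ a ⊓ b ≤ z := by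
  refine ⟨fun h => (inf_le_inf_left a h).trans (inf_imp_le a z), fun h => ?_⟩
  have hba : ptop ≤ imp b (imp a z) := by
    rw [← f3, inf_comm]
    exact ptop_le_imp_of_le h
  exact le_of_le_imp_self (hb.trans hba)

theorem imp_imp_self_eq_of_le_ptop {a : A} (ha : a ≤ ptop) (b : A) : imp (imp a b) a = a := by
  have hq : imp (imp a b) a ≤ ptop := imp_le_ptop (imp_le_ptop ha b) a
  refine le_antisymm (le_of_le_imp_self (hq.trans (f5 a b))) ?_
  exact (le_imp_iff_inf_le ha).mpr inf_le_right

end FgAlgebra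

/-- given an Fg-algebra `A`, the image `◇(A) = {x ⊓ ⊤' : x ∈ A}`,
with the restricted operations and bounds `⊥` and `⊤'`, is a Boolean algebra,
i.e. a generalized Boolean algebra (closure, residuation, Peirce's law, top
`⊤'`) with a bottom element `⊥`. -/
theorem fg_diamond_boolean {A : Type*} [FgAlgebra A] :
    let S : Set A := Set.range (fun x : A => x ⊓ ptop)
    (∀ a ∈ S, ∀ b ∈ S, a ⊓ b ∈ S ∧ a ⊔ b ∈ S ∧ imp a b ∈ S) ∧
    ((ptop : A) ∈ S) ∧
    ((⊥ : A) ∈ S) ∧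
    (∀ a ∈ S, ⊥ ≤ a ∧ a ≤ ptop) ∧
    (∀ a ∈ S, ∀ b ∈ S, ∀ z ∈ S, (a ⊓ b ≤ z ↔ b ≤ imp a z)) ∧
    (∀ a ∈ S, ∀ b ∈ S, imp (imp a b) a = a) := by
  intro S
  have hS : ∀ {a : A}, a ∈ S ↔ a ≤ ptop := mem_range_inf_ptop_iff
  simp only [hS]
  refine ⟨fun a ha b hb => ⟨inf_le_left.trans ha, sup_le ha hb, imp_le_ptop ha b⟩, le_rfl,
    bot_le, fun a ha => ⟨bot_le, ha⟩, fun a _ b hb z _ => (le_imp_iff_inf_le hb).symm,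
    fun a ha b _ => imp_imp_self_eq_of_le_ptop ha b⟩
end
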